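/- Let a_0, a_1, a_2, ... be i.i.d. complex random variables with ℙ(a_0 = 0) = 0 and |a_0| not almost surely constant. Suppose the distribution of |a_0| is absolutely continuous with respect to Lebesgue measure on [0,∞) with density g, and that g(t) ~ α t as t → 0+ for some α > 0 (i.e. g(t)/t → α). Then for every integer n ≥ 1, the largest root modulus x_n^(n) of P_n(z) = ∑_{k=0}^n a_k z^k satisfies 𝔼[(x_n^(n))^2] = ∞. -/

import Mathlib

/-!
Vieta's formula gives `a_{n-1} / a_n = -∑ zᵢ`, hence `|a_{n-1}| ≤ n |a_n| x_n^(n)`, i.e.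
`(x_n^(n))² ≥ (|a_{n-1}| / n)² · |a_n|⁻²`. The two factors are independent, the first has positive
mean and the second infinite mean: near `0` the density of `|a_0|` is at least `α t / 2`, so
`ℙ(|a_0|² ≤ u) ≥ α u / 4` for small `u`, and the layer-cake formula turns this into
`𝔼[|a_0|⁻²] ≥ ∫^∞ α / (4t) dt = ∞`.
-/

open MeasureTheory ProbabilityTheory Polynomial Filter

/-- The random Kac polynomial `P_n(z) = ∑_{k=0}^n a_k z^k`. -/
noncomputable def kacPoly {Ω : Type*} (a : ℕ → Ω → ℂ) (n : ℕ) (ω : Ω) : Polynomial ℂ :=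
  ∑ k ∈ Finset.range (n + 1), Polynomial.C (a k ω) * Polynomial.X ^ k

noncomputable def minRootMod (p : Polynomial ℂ) : ℝ :=
  sInf ((fun z : ℂ => ‖z‖) '' {z : ℂ | z ∈ p.roots})

noncomputable def maxRootMod (p : Polynomial ℂ) : ℝ :=
  sSup ((fun z : ℂ => ‖z‖) '' {z : ℂ | z ∈ p.roots})

open scoped ENNReal Topology
open Set

section RootBound

lemma maxRootMod_nonneg (p : ℂ[X]) : 0 ≤ maxRootMod p :=
  Real.sSup_nonneg <| by rintro _ ⟨z, -, rfl⟩; exact norm_nonneg z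

lemma norm_le_maxRootMod {p : ℂ[X]} {z : ℂ} (hz : z ∈ p.roots) : ‖z‖ ≤ maxRootMod p :=
  le_csSup (p.roots.finite_toSet.image _).bddAbove ⟨z, hz, rfl⟩

/-- Vieta: `nextCoeff = -leadingCoeff * ∑ roots`, and there are at most `natDegree` roots. -/
lemma norm_nextCoeff_le_natDegree_mul_maxRootMod (p : ℂ[X]) :
    ‖p.nextCoeff‖ ≤ p.natDegree * ‖p.leadingCoeff‖ * maxRootMod p := by
  have hsum : ‖p.roots.sum‖ ≤ p.natDegree * maxRootMod p :=
    calc ‖p.roots.sum‖ ≤ (p.roots.map (‖·‖)).sum := norm_multiset_sum_le p.roots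
      _ ≤ p.roots.card • maxRootMod p := by
          simpa using Multiset.sum_le_card_nsmul (p.roots.map (‖·‖)) _
            (Multiset.forall_mem_map_iff.2 fun z hz => norm_le_maxRootMod hz)
      _ ≤ p.natDegree * maxRootMod p := by
          rw [nsmul_eq_mul]
          gcongr
          · exact maxRootMod_nonneg p
          · exact_mod_cast p.card_roots'
  rw [(IsAlgClosed.splits p).nextCoeff_eq_neg_sum_roots_mul_leadingCoeff, norm_mul, norm_neg]
  nlinarith [norm_nonneg p.leadingCoeff]

end RootBound

section KacPolynomial

variable {Ω : Type*} (a : ℕ → Ω → ℂ) (n : ℕ) (ω : Ω)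

lemma kacPoly_coeff (j : ℕ) : (kacPoly a n ω).coeff j = if j ≤ n then a j ω else 0 := by
  simp [kacPoly, Polynomial.coeff_X_pow]

variable {a n ω}

lemma kacPoly_natDegree (h : a n ω ≠ 0) : (kacPoly a n ω).natDegree = n :=
  natDegree_eq_of_le_of_coeff_ne_zero
    (natDegree_le_iff_coeff_eq_zero.2 fun j hj => by simp [kacPoly_coeff, not_le.2 hj])
    (by simpa [kacPoly_coeff] using h)

lemma kacPoly_leadingCoeff (h : a n ω ≠ 0) : (kacPoly a n ω).leadingCoeff = a n ω := by
  simp [leadingCoeff, kacPoly_natDegree h, kacPoly_coeff]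

lemma kacPoly_nextCoeff (hn : n ≠ 0) (h : a n ω ≠ 0) :
    (kacPoly a n ω).nextCoeff = a (n - 1) ω := by
  rw [nextCoeff_of_natDegree_pos (by rw [kacPoly_natDegree h]; omega), kacPoly_natDegree h,
    kacPoly_coeff, if_pos (Nat.sub_le n 1)]

/-- Since `x / 0 = 0`, the cases `n = 0` and `a n ω = 0` hold trivially. -/
lemma norm_coeff_pred_div_le_maxRootMod_kacPoly :
    ‖a (n - 1) ω‖ / (n * ‖a n ω‖) ≤ maxRootMod (kacPoly a n ω) := by
  rcases eq_or_ne ((n : ℝ) * ‖a n ω‖) 0 with h | h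
  · simpa [h] using maxRootMod_nonneg _
  have hn : n ≠ 0 := by rintro rfl; simp at h
  have han : a n ω ≠ 0 := by rintro han; simp [han] at h
  rw [div_le_iff₀' (lt_of_le_of_ne (by positivity) (Ne.symm h))]
  simpa [kacPoly_natDegree han, kacPoly_leadingCoeff han, kacPoly_nextCoeff hn han]
    using norm_nextCoeff_le_natDegree_mul_maxRootMod (kacPoly a n ω)

end KacPolynomial

section SmallBall

variable {Ω : Type*} [MeasurableSpace Ω] {μ : Measure Ω}

lemma lintegral_Ioi_ofReal_inv_eq_top {T : ℝ} (hT : 0 ≤ T) :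
    ∫⁻ t in Ioi T, ENNReal.ofReal t⁻¹ = ∞ := by
  by_contra h
  refine not_integrableOn_Ioi_inv ((lintegral_ofReal_ne_top_iff_integrable
    measurable_inv.aestronglyMeasurable ?_).1 h)
  filter_upwards [ae_restrict_mem measurableSet_Ioi] with t ht
  exact inv_nonneg.2 (hT.trans ht.le)

lemma lintegral_ofReal_inv_eq_top_of_le_measure_le {Y : Ω → ℝ} (hY : AEMeasurable Y μ)
    (hY0 : μ {ω | Y ω ≤ 0} = 0) {c δ : ℝ} (hc : 0 < c) (hδ : 0 < δ)
    (hball : ∀ u ∈ Ioo 0 δ, ENNReal.ofReal (c * u) ≤ μ {ω | Y ω ≤ u}) :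
    ∫⁻ ω, ENNReal.ofReal (Y ω)⁻¹ ∂μ = ∞ := by
  have hpos : ∀ᵐ ω ∂μ, 0 < Y ω := by
    rw [ae_iff]; simpa using hY0
  have htail : ∀ t ∈ Ioi δ⁻¹, ENNReal.ofReal c * ENNReal.ofReal t⁻¹ ≤ μ {ω | t ≤ (Y ω)⁻¹} := by
    intro t ht
    have htpos : 0 < t := (inv_pos.2 hδ).trans ht
    calc ENNReal.ofReal c * ENNReal.ofReal t⁻¹ ≤ μ {ω | Y ω ≤ t⁻¹} := by
          rw [← ENNReal.ofReal_mul hc.le]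
          exact hball _ ⟨inv_pos.2 htpos, inv_lt_of_inv_lt₀ hδ ht⟩
      _ ≤ μ {ω | t ≤ (Y ω)⁻¹} := measure_mono_ae <| hpos.mono fun ω hω hle =>
          le_inv_of_le_inv₀ hω hle
  rw [lintegral_eq_lintegral_meas_le μ (hpos.mono fun ω h => (inv_pos.2 h).le) hY.inv,
    eq_top_iff]
  calc ∞ = ∫⁻ t in Ioi δ⁻¹, ENNReal.ofReal c * ENNReal.ofReal t⁻¹ := by
        rw [lintegral_const_mul' _ _ ENNReal.ofReal_ne_top,
          lintegral_Ioi_ofReal_inv_eq_top (inv_pos.2 hδ).le, ENNReal.mul_top (by simpa using hc)]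
    _ ≤ ∫⁻ t in Ioi δ⁻¹, μ {ω | t ≤ (Y ω)⁻¹} := setLIntegral_mono' measurableSet_Ioi htail
    _ ≤ ∫⁻ t in Ioi 0, μ {ω | t ≤ (Y ω)⁻¹} :=
        lintegral_mono_set (Ioi_subset_Ioi (inv_pos.2 hδ).le)

lemma lintegral_ofReal_inv_norm_sq_eq_top {E : Type*} [NormedAddCommGroup E] [MeasurableSpace E]
    [OpensMeasurableSpace E] {b : Ω → E}
    (hb : AEMeasurable b μ) (hb0 : μ {ω | b ω = 0} = 0) {c δ : ℝ} (hc : 0 < c) (hδ : 0 < δ)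
    (hball : ∀ u ∈ Ioo 0 δ, ENNReal.ofReal (c * u ^ 2) ≤ μ {ω | ‖b ω‖ ≤ u}) :
    ∫⁻ ω, ENNReal.ofReal (‖b ω‖⁻¹ ^ 2) ∂μ = ∞ := by
  simp_rw [inv_pow]
  refine lintegral_ofReal_inv_eq_top_of_le_measure_le (hb.norm.pow_const 2) (by simpa using hb0)
    hc (pow_pos hδ 2) fun v hv => ?_
  have hsqrt : √v ∈ Ioo 0 δ :=
    ⟨Real.sqrt_pos.2 hv.1, (Real.sqrt_lt' hδ).2 hv.2⟩
  convert hball _ hsqrt using 2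
  · rw [Real.sq_sqrt hv.1.le]
  · ext ω; simp [← Real.le_sqrt (norm_nonneg _) hv.1.le]

end SmallBall

section Density

variable {Ω : Type*} [MeasurableSpace Ω] {μ : Measure Ω} [IsFiniteMeasure μ] [NeZero μ]
  {R : Ω → ℝ} {g : ℝ → ℝ}

/-- Otherwise `∫₀ᵗ g` would be the junk value `0` for every large `t`, forcing `μ = 0`. -/
lemma intervalIntegrable_of_measure_le_eq_integral
    (hdens : ∀ t, 0 ≤ t → (μ {ω | R ω ≤ t}).toReal = ∫ s in (0 : ℝ)..t, g s)
    {u : ℝ} (hu : 0 ≤ u) : IntervalIntegrable g volume 0 u := by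
  by_contra hg
  have hnull : ∀ k : ℕ, μ {ω | R ω ≤ max u k} = 0 := fun k => by
    have hk : ¬ IntervalIntegrable g volume 0 (max u k) := fun h =>
      hg (h.mono_set (uIcc_subset_uIcc_left (by simp [uIcc_of_le, hu])))
    have := hdens (max u k) (hu.trans (le_max_left _ _))
    rw [intervalIntegral.integral_undef hk, ENNReal.toReal_eq_zero_iff] at this
    exact this.resolve_right (measure_ne_top _ _)
  refine NeZero.ne μ (Measure.measure_univ_eq_zero.1 (measure_mono_null (fun ω _ => ?_)
    (measure_iUnion_null hnull)))
  exact mem_iUnion.2 ⟨⌈R ω⌉₊, show R ω ≤ _ from (Nat.le_ceil _).trans (le_max_right _ _)⟩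

lemma exists_le_measure_le_of_tendsto_density_div
    (hdens : ∀ t, 0 ≤ t → (μ {ω | R ω ≤ t}).toReal = ∫ s in (0 : ℝ)..t, g s)
    {α : ℝ} (hα : 0 < α) (hequiv : Tendsto (fun t => g t / t) (𝓝[>] 0) (𝓝 α)) :
    ∃ δ > 0, ∀ u ∈ Ioo 0 δ, ENNReal.ofReal (α / 4 * u ^ 2) ≤ μ {ω | R ω ≤ u} := by
  obtain ⟨δ, hδ, hsub⟩ := mem_nhdsGT_iff_exists_Ioo_subset.1
    (hequiv.eventually (lt_mem_nhds (half_lt_self hα)))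
  have hlin : ∀ t ∈ Ioo 0 δ, α / 2 * t ≤ g t := fun t ht =>
    ((lt_div_iff₀ ht.1).1 (hsub ht)).le
  refine ⟨δ, hδ, fun u hu => ENNReal.ofReal_le_of_le_toReal ?_⟩
  rw [hdens u hu.1.le]
  calc α / 4 * u ^ 2 = ∫ s in (0 : ℝ)..u, α / 2 * s := by
        rw [intervalIntegral.integral_const_mul, integral_id]; ring
    _ ≤ ∫ s in (0 : ℝ)..u, g s :=
        intervalIntegral.integral_mono_on_of_le_Ioo hu.1.le
          ((continuous_const_mul _).intervalIntegrable _ _)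
          (intervalIntegrable_of_measure_le_eq_integral hdens hu.1.le)
          fun s hs => hlin s ⟨hs.1, hs.2.trans hu.2⟩

end Density

theorem maxRootMod_infinite_second_moment_of_density_linear_at_zero_general
    {Ω : Type*} [MeasurableSpace Ω] (μ : Measure Ω) [IsProbabilityMeasure μ]
    (a : ℕ → Ω → ℂ) (hmeas : ∀ k, Measurable (a k))
    (hindep : iIndepFun a μ)
    (hid : ∀ k, IdentDistrib (a k) (a 0) μ μ)
    (h0 : μ {ω | a 0 ω = 0} = 0)
    (g : ℝ → ℝ)
    (hdens : ∀ t : ℝ, 0 ≤ t →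
      (μ {ω | ‖a 0 ω‖ ≤ t}).toReal = ∫ s in (0 : ℝ)..t, g s)
    (α : ℝ) (hα : 0 < α)
    (hequiv : Filter.Tendsto (fun t => g t / t) (nhdsWithin 0 (Set.Ioi 0)) (nhds α)) :
    ∀ n : ℕ, 1 ≤ n →
      ∫⁻ ω, ENNReal.ofReal (maxRootMod (kacPoly a n ω) ^ 2) ∂μ = ⊤ := by
  intro n hn
  have hnz : ∀ k, ∀ᵐ ω ∂μ, a k ω ≠ 0 := fun k => by
    rw [ae_iff]
    simp only [ne_eq, not_not]
    exact ((hid k).measure_mem_eq (measurableSet_singleton 0)).trans h0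
  have hinv : ∫⁻ ω, ENNReal.ofReal (‖a n ω‖⁻¹ ^ 2) ∂μ = ∞ := by
    obtain ⟨δ, hδ, hball⟩ := exists_le_measure_le_of_tendsto_density_div hdens hα hequiv
    rw [← lintegral_ofReal_inv_norm_sq_eq_top (hmeas 0).aemeasurable h0 (by positivity) hδ hball]
    exact ((hid n).comp (by fun_prop : Measurable fun z : ℂ =>
      ENNReal.ofReal (‖z‖⁻¹ ^ 2))).lintegral_eq
  set U : Ω → ℝ≥0∞ := fun ω => ENNReal.ofReal ((‖a (n - 1) ω‖ / n) ^ 2)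
  set V : Ω → ℝ≥0∞ := fun ω => ENNReal.ofReal (‖a n ω‖⁻¹ ^ 2)
  have hUmeas : Measurable U := by fun_prop
  have hU : ∫⁻ ω, U ω ∂μ ≠ 0 := by
    rw [Ne, lintegral_eq_zero_iff hUmeas]
    intro hzero
    obtain ⟨ω, hUω, hω⟩ := (hzero.and (hnz (n - 1))).exists
    simp only [U, Pi.zero_apply, ENNReal.ofReal_eq_zero] at hUω
    have : (0 : ℝ) < n := by exact_mod_cast hn
    exact (by positivity : 0 < (‖a (n - 1) ω‖ / n) ^ 2).not_ge hUω
  have hUV : IndepFun U V μ := (hindep.indepFun (by omega : n - 1 ≠ n)).comp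
    (φ := fun z => ENNReal.ofReal ((‖z‖ / n) ^ 2)) (ψ := fun z => ENNReal.ofReal (‖z‖⁻¹ ^ 2))
    (by fun_prop) (by fun_prop)
  rw [eq_top_iff]
  calc ∞ = (∫⁻ ω, U ω ∂μ) * ∫⁻ ω, V ω ∂μ := by rw [hinv, ENNReal.mul_top hU]
    _ = ∫⁻ ω, U ω * V ω ∂μ :=
        (lintegral_mul_eq_lintegral_mul_lintegral_of_indepFun hUmeas (by fun_prop) hUV).symm
    _ ≤ _ := lintegral_mono fun ω => by
        rw [← ENNReal.ofReal_mul (by positivity), ← mul_pow, ← div_eq_mul_inv, div_div]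
        exact ENNReal.ofReal_le_ofReal
          (pow_le_pow_left₀ (by positivity) norm_coeff_pred_div_le_maxRootMod_kacPoly 2)

/-- For i.i.d. complex coefficients with `ℙ(a₀ = 0) = 0`, `|a₀|` not a.s.
constant, and `|a₀|` having a density `g` on `[0,∞)` (`ℙ(|a₀| ≤ t) = ∫₀ᵗ g`) with
`g(t) ~ α t` as `t → 0⁺` for some `α > 0`, the largest root modulus of `P_n` has infinite
second moment for every `n ≥ 1`. -/
theorem maxRootMod_infinite_second_moment_of_density_linear_at_zero
    {Ω : Type*} [MeasurableSpace Ω] (μ : Measure Ω) [IsProbabilityMeasure μ]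
    (a : ℕ → Ω → ℂ) (hmeas : ∀ k, Measurable (a k))
    (hindep : iIndepFun a μ)
    (hid : ∀ k, IdentDistrib (a k) (a 0) μ μ)
    (hnc : ¬ ∃ c : ℝ, 0 ≤ c ∧ μ {ω | ‖a 0 ω‖ = c} = 1)
    (h0 : μ {ω | a 0 ω = 0} = 0)
    (g : ℝ → ℝ) (hgmeas : Measurable g) (hgnonneg : ∀ t, 0 ≤ g t)
    (hdens : ∀ t : ℝ, 0 ≤ t →
      (μ {ω | ‖a 0 ω‖ ≤ t}).toReal = ∫ s in (0 : ℝ)..t, g s)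
    (α : ℝ) (hα : 0 < α)
    (hequiv : Filter.Tendsto (fun t => g t / t) (nhdsWithin 0 (Set.Ioi 0)) (nhds α)) :
    ∀ n : ℕ, 1 ≤ n →
      ∫⁻ ω, ENNReal.ofReal (maxRootMod (kacPoly a n ω) ^ 2) ∂μ = ⊤ :=
  maxRootMod_infinite_second_moment_of_density_linear_at_zero_general μ a hmeas hindep hid h0 g
    hdens α hα hequiv
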